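/- arXiv:1805.01873 — 5 statements merged into one kernel-verified Lean document; each statement's English description precedes it below -/
import Mathlib

section
/- Let B = ℚ[z₁,…,zₙ,c₁,…,c_r], let K = ℚ(c₁,…,c_r) be the field of fractions of ℚ[c₁,…,c_r], let A = K[z₁,…,zₙ], and let φ : B → A be the canonical injective ring homomorphism (sending each z_i to z_i and each c_j to the corresponding element of K). Let ≻₁ be a monomial order on the z-monomials, ≻₂ a monomial order on the c-monomials, and ≻ the block ordering (≻₁,≻₂) on the monomials of B. Let v₁,…,v_l ∈ B, let U' ⊆ B be the ideal generated by v₁,…,v_l, and let U ⊆ A be the ideal generated by φ(v₁),…,φ(v_l). If G is a Gröbner basis of U' with respect to ≻, then φ(G) = {φ(g) : g ∈ G} is a Gröbner basis of U with respect to ≻₁; that is, for every nonzero f ∈ U there exists g ∈ G such that the ≻₁-leading monomial of φ(g) divides the ≻₁-leading monomial of f. -/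
open MvPolynomial

/-- The "z-part" of a monomial of `F[z₁,…,zₙ,c₁,…,c_r]`. -/
noncomputable def zpart {n r : ℕ} (μ : (Fin n ⊕ Fin r) →₀ ℕ) : Fin n →₀ ℕ :=
  Finsupp.equivFunOnFinite.symm fun i => μ (Sum.inl i)

/-- The "c-part" of a monomial of `F[z₁,…,zₙ,c₁,…,c_r]`. -/
noncomputable def cpart {n r : ℕ} (μ : (Fin n ⊕ Fin r) →₀ ℕ) : Fin r →₀ ℕ :=
  Finsupp.equivFunOnFinite.symm fun j => μ (Sum.inr j)

/-- `α` is the leading monomial of `f` with respect to the (non-strict) order `le`: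
it occurs in `f` and dominates every monomial of `f`. -/
def IsLeadMon {σ F : Type*} [CommSemiring F]
    (le : (σ →₀ ℕ) → (σ →₀ ℕ) → Prop)
    (f : MvPolynomial σ F) (α : σ →₀ ℕ) : Prop :=
  α ∈ f.support ∧ ∀ β ∈ f.support, le β α

/-- The canonical ring homomorphism
`ℚ[z₁,…,zₙ,c₁,…,c_r] → ℚ(c₁,…,c_r)[z₁,…,zₙ]` sending each `zᵢ` to `zᵢ`
and each `cⱼ` to the corresponding constant of the fraction field. -/
noncomputable def toParamRing (n r : ℕ) :
    MvPolynomial (Fin n ⊕ Fin r) ℚ →+*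
      MvPolynomial (Fin n) (FractionRing (MvPolynomial (Fin r) ℚ)) :=
  eval₂Hom
    ((C : FractionRing (MvPolynomial (Fin r) ℚ) →+* _).comp
      ((algebraMap (MvPolynomial (Fin r) ℚ)
          (FractionRing (MvPolynomial (Fin r) ℚ))).comp (C : ℚ →+* _)))
    (Sum.elim (fun i => X i)
      (fun j => C (algebraMap (MvPolynomial (Fin r) ℚ)
        (FractionRing (MvPolynomial (Fin r) ℚ)) (X j))))

/-!
Clear denominators: every `f ∈ U` has a nonzero multiple `d(c) • f` (with `d ∈ ℚ[c]`) of the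
form `φ h` with `h ∈ U'`, and `f` and `φ h` have the same support. Since `z` is the first block,
the block-leading monomial `μ` of `h` has as z-part the `≻₁`-leading monomial of `φ h`, hence
of `f`; and if the block-leading monomial of `g ∈ G` divides `μ`, its z-part divides the z-part
of `μ`.
-/

section SumAlgEquiv

variable {R σ τ : Type*} [CommSemiring R]

theorem MvPolynomial.sumAlgEquiv_monomial (ν : σ ⊕ τ →₀ ℕ) (a : R) :
    sumAlgEquiv R σ τ (monomial ν a) =
      monomial (Finsupp.sumFinsuppAddEquivProdFinsupp ν).1
        (monomial (Finsupp.sumFinsuppAddEquivProdFinsupp ν).2 a) := by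
  simp [sumAlgEquiv, monomial]

theorem MvPolynomial.coeff_coeff_sumAlgEquiv (p : MvPolynomial (σ ⊕ τ) R) (α : σ →₀ ℕ)
    (γ : τ →₀ ℕ) : coeff γ (coeff α (sumAlgEquiv R σ τ p)) = coeff (α.sumElim γ) p := by
  classical
  induction p using MvPolynomial.induction_on' with
  | monomial ν a =>
    have split_eq : (Finsupp.sumFinsuppAddEquivProdFinsupp ν).1 = α ∧
        (Finsupp.sumFinsuppAddEquivProdFinsupp ν).2 = γ ↔ ν = α.sumElim γ := by
      change _ ↔ ν = Finsupp.sumFinsuppAddEquivProdFinsupp.symm (α, γ)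
      rw [AddEquiv.eq_symm_apply, Prod.ext_iff]
    rw [sumAlgEquiv_monomial, coeff_monomial, coeff_monomial]
    split_ifs <;> simp_all [coeff_monomial]
  | add p q hp hq => simp [hp, hq]

theorem MvPolynomial.mem_support_sumAlgEquiv {p : MvPolynomial (σ ⊕ τ) R} {α : σ →₀ ℕ} :
    α ∈ (sumAlgEquiv R σ τ p).support ↔ ∃ γ, α.sumElim γ ∈ p.support := by
  simp only [mem_support_iff, ne_zero_iff, coeff_coeff_sumAlgEquiv]

end SumAlgEquiv

section ClearDenominators

attribute [local instance] MvPolynomial.algebraMvPolynomial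

theorem MvPolynomial.exists_support_eq_of_mem_map_map_algebraMap {R K σ : Type*} [CommRing R]
    [Field K] [Algebra R K] [IsFractionRing R K] {I : Ideal (MvPolynomial σ R)}
    {f : MvPolynomial σ K} (hf : f ∈ I.map (map (algebraMap R K))) :
    ∃ h ∈ I, h.support = f.support := by
  obtain ⟨⟨⟨h, hI⟩, ⟨_, d, hd, rfl⟩⟩, hfh⟩ :=
    (IsLocalization.mem_map_algebraMap_iff ((nonZeroDivisors R).map C) (MvPolynomial σ K)).mp hf
  refine ⟨h, hI, ?_⟩
  have hd' : algebraMap R K d ≠ 0 :=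
    (IsLocalization.map_units K (⟨d, hd⟩ : nonZeroDivisors R)).ne_zero
  simp only [algebraMap_def, map_C] at hfh
  rw [← support_map_of_injective h (IsFractionRing.injective R K), ← hfh, mul_comm, C_mul',
    support_smul_eq hd']

end ClearDenominators

section ZPart

variable {n r : ℕ}

@[simp] theorem zpart_sumElim (α : Fin n →₀ ℕ) (γ : Fin r →₀ ℕ) : zpart (α.sumElim γ) = α := by
  ext i; rfl

theorem sumElim_zpart_cpart (μ : Fin n ⊕ Fin r →₀ ℕ) : (zpart μ).sumElim (cpart μ) = μ := by
  ext (i | j) <;> rfl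

theorem zpart_mono {μ ν : Fin n ⊕ Fin r →₀ ℕ} (h : μ ≤ ν) : zpart μ ≤ zpart ν :=
  fun i => h (Sum.inl i)

theorem le_zpart_of_block
    {le1 : (Fin n →₀ ℕ) → (Fin n →₀ ℕ) → Prop} {le2 : (Fin r →₀ ℕ) → (Fin r →₀ ℕ) → Prop}
    (h1refl : ∀ α, le1 α α)
    {leB : ((Fin n ⊕ Fin r) →₀ ℕ) → ((Fin n ⊕ Fin r) →₀ ℕ) → Prop}
    (hleB : ∀ μ ν, leB μ ν ↔
      ((le1 (zpart μ) (zpart ν) ∧ zpart μ ≠ zpart ν) ∨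
        (zpart μ = zpart ν ∧ le2 (cpart μ) (cpart ν))))
    (μ ν : Fin n ⊕ Fin r →₀ ℕ) (h : leB μ ν) : le1 (zpart μ) (zpart ν) := by
  rcases (hleB μ ν).mp h with ⟨hlt, -⟩ | ⟨heq, -⟩
  · exact hlt
  · exact heq ▸ h1refl _

end ZPart

section LeadingMonomials

variable {σ : Type*}

theorem IsLeadMon.of_support_eq {R S : Type*} [CommSemiring R] [CommSemiring S]
    {le : (σ →₀ ℕ) → (σ →₀ ℕ) → Prop} {f : MvPolynomial σ R} {g : MvPolynomial σ S}
    {α : σ →₀ ℕ} (hfg : f.support = g.support) (hf : IsLeadMon le f α) : IsLeadMon le g α := by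
  rwa [IsLeadMon, ← hfg]

theorem IsLeadMon.sumAlgEquiv_zpart {R : Type*} [CommSemiring R] {n r : ℕ}
    {le1 : (Fin n →₀ ℕ) → (Fin n →₀ ℕ) → Prop}
    {leB : ((Fin n ⊕ Fin r) →₀ ℕ) → ((Fin n ⊕ Fin r) →₀ ℕ) → Prop}
    (hle : ∀ μ ν, leB μ ν → le1 (zpart μ) (zpart ν))
    {p : MvPolynomial (Fin n ⊕ Fin r) R} {μ : Fin n ⊕ Fin r →₀ ℕ} (hμ : IsLeadMon leB p μ) :
    IsLeadMon le1 (sumAlgEquiv R (Fin n) (Fin r) p) (zpart μ) := by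
  refine ⟨mem_support_sumAlgEquiv.mpr ⟨cpart μ, (sumElim_zpart_cpart μ).symm ▸ hμ.1⟩, ?_⟩
  intro β hβ
  obtain ⟨γ, hγ⟩ := mem_support_sumAlgEquiv.mp hβ
  simpa using hle _ _ (hμ.2 _ hγ)

end LeadingMonomials

section ToParamRing

variable {n r : ℕ}

theorem toParamRing_eq_comp :
    toParamRing n r = (map (algebraMap (MvPolynomial (Fin r) ℚ)
      (FractionRing (MvPolynomial (Fin r) ℚ)))).comp
        (sumAlgEquiv ℚ (Fin n) (Fin r)).toRingEquiv.toRingHom := by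
  apply ringHom_ext
  · intro a
    simp [toParamRing]
  · rintro (i | j) <;> simp [toParamRing]

theorem support_toParamRing (p : MvPolynomial (Fin n ⊕ Fin r) ℚ) :
    (toParamRing n r p).support = (sumAlgEquiv ℚ (Fin n) (Fin r) p).support := by
  rw [toParamRing_eq_comp]
  exact support_map_of_injective _ (IsFractionRing.injective _ _)

theorem exists_support_eq_of_mem_map_toParamRing {I : Ideal (MvPolynomial (Fin n ⊕ Fin r) ℚ)}
    {f : MvPolynomial (Fin n) (FractionRing (MvPolynomial (Fin r) ℚ))}
    (hf : f ∈ I.map (toParamRing n r)) :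
    ∃ h ∈ I, (sumAlgEquiv ℚ (Fin n) (Fin r) h).support = f.support := by
  rw [toParamRing_eq_comp, ← Ideal.map_map] at hf
  obtain ⟨h', hI, hsupp⟩ := exists_support_eq_of_mem_map_map_algebraMap hf
  obtain ⟨h, hh, rfl⟩ :=
    (Ideal.mem_map_of_equiv (sumAlgEquiv ℚ (Fin n) (Fin r)).toRingEquiv h').mp hI
  exact ⟨h, hh, hsupp⟩

end ToParamRing

theorem groebner_basis_localization_general (n r l : ℕ)
    (le1 : (Fin n →₀ ℕ) → (Fin n →₀ ℕ) → Prop)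
    (le2 : (Fin r →₀ ℕ) → (Fin r →₀ ℕ) → Prop)
    -- `le1` is a global monomial order on the z-monomials
    (h1refl : ∀ α, le1 α α)
    -- `leB` is the block ordering `(≻₁, ≻₂)`
    (leB : ((Fin n ⊕ Fin r) →₀ ℕ) → ((Fin n ⊕ Fin r) →₀ ℕ) → Prop)
    (hleB : ∀ μ ν, leB μ ν ↔
      ((le1 (zpart μ) (zpart ν) ∧ zpart μ ≠ zpart ν) ∨
        (zpart μ = zpart ν ∧ le2 (cpart μ) (cpart ν))))
    (v : Fin l → MvPolynomial (Fin n ⊕ Fin r) ℚ)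
    (U' : Ideal (MvPolynomial (Fin n ⊕ Fin r) ℚ))
    (hU' : U' = Ideal.span (Set.range v))
    (U : Ideal (MvPolynomial (Fin n) (FractionRing (MvPolynomial (Fin r) ℚ))))
    (hU : U = Ideal.span (Set.range fun i => toParamRing n r (v i)))
    -- `G` is a Gröbner basis of `U'` with respect to the block ordering `leB`
    (G : Finset (MvPolynomial (Fin n ⊕ Fin r) ℚ))
    (hGB : ∀ f ∈ U', f ≠ 0 → ∃ g ∈ G, ∃ α β,
      IsLeadMon leB f α ∧ IsLeadMon leB g β ∧ β ≤ α) :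
    -- then `φ(G)` is a Gröbner basis of `U` with respect to `≻₁`
    ∀ f ∈ U, f ≠ 0 → ∃ g ∈ G, ∃ α β,
      IsLeadMon le1 f α ∧ IsLeadMon le1 (toParamRing n r g) β ∧ β ≤ α := by
  intro f hf hf0
  have hUmap : U = U'.map (toParamRing n r) := by
    rw [hU, hU', Ideal.map_span, ← Set.range_comp]
    rfl
  obtain ⟨h, hhU', hsupp⟩ := exists_support_eq_of_mem_map_toParamRing (hUmap ▸ hf)
  have hh0 : h ≠ 0 := by
    rintro rfl
    exact hf0 (by simpa using hsupp.symm)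
  obtain ⟨g, hgG, α, β, hα, hβ, hβα⟩ := hGB h hhU' hh0
  have hle := le_zpart_of_block h1refl hleB
  exact ⟨g, hgG, zpart α, zpart β, (hα.sumAlgEquiv_zpart hle).of_support_eq hsupp,
    (hβ.sumAlgEquiv_zpart hle).of_support_eq (support_toParamRing g).symm, zpart_mono hβα⟩

/-- Localization: a Gröbner basis of `U' ⊆ ℚ[z,c]` with respect to the
global block ordering `(≻₁, ≻₂)` with `z ≻ c` maps under `φ` to a Gröbner basis of
`U ⊆ ℚ(c)[z]` with respect to `≻₁`. -/
theorem groebner_basis_localization (n r l : ℕ)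
    (le1 : (Fin n →₀ ℕ) → (Fin n →₀ ℕ) → Prop)
    (le2 : (Fin r →₀ ℕ) → (Fin r →₀ ℕ) → Prop)
    -- `le1` is a global monomial order on the z-monomials
    (h1refl : ∀ α, le1 α α)
    (h1trans : ∀ α β γ, le1 α β → le1 β γ → le1 α γ)
    (h1antisymm : ∀ α β, le1 α β → le1 β α → α = β)
    (h1total : ∀ α β, le1 α β ∨ le1 β α)
    (h1add : ∀ α β γ, le1 α β → le1 (α + γ) (β + γ))
    (h1global : ∀ α, le1 0 α)
    -- `le2` is a global monomial order on the c-monomials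
    (h2refl : ∀ α, le2 α α)
    (h2trans : ∀ α β γ, le2 α β → le2 β γ → le2 α γ)
    (h2antisymm : ∀ α β, le2 α β → le2 β α → α = β)
    (h2total : ∀ α β, le2 α β ∨ le2 β α)
    (h2add : ∀ α β γ, le2 α β → le2 (α + γ) (β + γ))
    (h2global : ∀ α, le2 0 α)
    -- `leB` is the block ordering `(≻₁, ≻₂)`
    (leB : ((Fin n ⊕ Fin r) →₀ ℕ) → ((Fin n ⊕ Fin r) →₀ ℕ) → Prop)
    (hleB : ∀ μ ν, leB μ ν ↔
      ((le1 (zpart μ) (zpart ν) ∧ zpart μ ≠ zpart ν) ∨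
        (zpart μ = zpart ν ∧ le2 (cpart μ) (cpart ν))))
    (v : Fin l → MvPolynomial (Fin n ⊕ Fin r) ℚ)
    (U' : Ideal (MvPolynomial (Fin n ⊕ Fin r) ℚ))
    (hU' : U' = Ideal.span (Set.range v))
    (U : Ideal (MvPolynomial (Fin n) (FractionRing (MvPolynomial (Fin r) ℚ))))
    (hU : U = Ideal.span (Set.range fun i => toParamRing n r (v i)))
    -- `G` is a Gröbner basis of `U'` with respect to the block ordering `leB`
    (G : Finset (MvPolynomial (Fin n ⊕ Fin r) ℚ))
    (hGne : ∀ g ∈ G, g ≠ 0)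
    (hGsub : ∀ g ∈ G, g ∈ U')
    (hGB : ∀ f ∈ U', f ≠ 0 → ∃ g ∈ G, ∃ α β,
      IsLeadMon leB f α ∧ IsLeadMon leB g β ∧ β ≤ α) :
    -- then `φ(G)` is a Gröbner basis of `U` with respect to `≻₁`
    ∀ f ∈ U, f ≠ 0 → ∃ g ∈ G, ∃ α β,
      IsLeadMon le1 f α ∧ IsLeadMon le1 (toParamRing n r g) β ∧ β ≤ α :=
  groebner_basis_localization_general n r l le1 le2 h1refl leB hleB v U' hU' U hU G hGB
end

section
/- Let F be a field, let A = F[z₁,…,zₙ] with a monomial order ⪯, and let g₁,…,g_l be nonzero polynomials in A. For nonzero f, g ∈ A define spoly(f,g) = (X^γ / LT(f)) · f − (X^γ / LT(g)) · g, where LT denotes the ⪯-leading term and X^γ is the least common multiple of the leading monomials of f and g (γ is the componentwise maximum of their leading exponent vectors). Suppose that for all i ≠ j the S-polynomial spoly(g_i, g_j) admits a standard representation: there exist a₁,…,a_l ∈ A with spoly(g_i,g_j) = Σ_{k=1}^{l} a_k g_k such that for every k with a_k g_k ≠ 0, the ⪯-leading monomial of a_k g_k is ⪯ the ⪯-leading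 monomial of spoly(g_i,g_j) (this holds vacuously when spoly(g_i,g_j) = 0 provided all a_k g_k = 0). Then {g₁,…,g_l} is a Gröbner basis of the ideal it generates: for every nonzero f in the ideal ⟨g₁,…,g_l⟩ there exists i such that the ⪯-leading monomial of g_i divides the ⪯-leading monomial of f. -/
/-!
Take a representation `f = ∑ aₖ gₖ` for which the largest monomial `δ` occurring in the
summands `aₖ gₖ` is minimal. If `δ` occurs in `f`, it is the leading monomial of `f` and of
some `aₖ gₖ`, so the leading monomial of `gₖ` divides it. Otherwise the top terms of the
summands cancel at `δ`; a sum of monomial multiples of the `gᵢ` with cancelling leading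
coefficients is a combination of the shifted S-polynomials `X^(δ - lcm) · spoly(gᵢ, gⱼ)`,
and substituting their standard representations gives a representation whose summands all
lie below `δ`, contradicting minimality.

The hypotheses on `le` make it a `MonomialOrder` (well-founded by Dickson's lemma), and
Mathlib's `MonomialOrder.sPolynomial` is a nonzero multiple of `spolyOf`.
-/

open MvPolynomial

/-- The S-polynomial of `f` and `g`, where `αf`, `αg` are their respective leading
monomials: `spoly(f,g) = (X^γ / LT f) · f − (X^γ / LT g) · g`, with
`γ = max(αf, αg)` componentwise (so `X^γ = lcm` of the leading monomials). -/
noncomputable def spolyOf {F : Type*} [Field F] {n : ℕ}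
    (f g : MvPolynomial (Fin n) F) (αf αg : Fin n →₀ ℕ) : MvPolynomial (Fin n) F :=
  monomial (Finsupp.zipWith max (max_self 0) αf αg - αf) ((coeff αf f)⁻¹) * f -
  monomial (Finsupp.zipWith max (max_self 0) αf αg - αg) ((coeff αg g)⁻¹) * g

open scoped MonomialOrder

namespace MvPolynomial

variable {σ ι R : Type*} [CommSemiring R] [Fintype ι]

def combinationsSupportedIn (g : ι → MvPolynomial σ R) (s : Set (σ →₀ ℕ)) :
    Submodule R (MvPolynomial σ R) where
  carrier :=
    {f | ∃ a : ι → MvPolynomial σ R, f = ∑ k, a k * g k ∧ ∀ k, ↑(a k * g k).support ⊆ s}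
  zero_mem' := ⟨0, by simp, by simp⟩
  add_mem' := by
    rintro _ _ ⟨a, rfl, ha⟩ ⟨b, rfl, hb⟩
    refine ⟨a + b, by simp [add_mul, Finset.sum_add_distrib], fun k => ?_⟩
    classical
    intro τ hτ
    rw [Pi.add_apply, add_mul, Finset.mem_coe] at hτ
    exact (Finset.mem_union.mp (support_add hτ)).elim (ha k ·) (hb k ·)
  smul_mem' := by
    rintro c _ ⟨a, rfl, ha⟩
    refine ⟨c • a, by simp [Finset.smul_sum], fun k => ?_⟩
    rw [Pi.smul_apply, smul_mul_assoc]
    exact (Finset.coe_subset.mpr (support_smul)).trans (ha k)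

variable {g : ι → MvPolynomial σ R} {s t : Set (σ →₀ ℕ)} {f : MvPolynomial σ R}

theorem combinationsSupportedIn_mono (h : s ⊆ t) :
    combinationsSupportedIn g s ≤ combinationsSupportedIn g t := by
  rintro _ ⟨a, rfl, ha⟩
  exact ⟨a, rfl, fun k => (ha k).trans h⟩

theorem mul_mem_combinationsSupportedIn [DecidableEq ι] {p : MvPolynomial σ R} (k : ι)
    (h : ↑(p * g k).support ⊆ s) : p * g k ∈ combinationsSupportedIn g s := by
  refine ⟨Pi.single k p, by simp [Pi.single_apply], fun j => ?_⟩
  rcases eq_or_ne j k with rfl | hj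
  · simpa using h
  · simp [hj]

theorem support_subset_of_mem_combinationsSupportedIn (hf : f ∈ combinationsSupportedIn g s) :
    ↑f.support ⊆ s := by
  classical
  obtain ⟨a, rfl, ha⟩ := hf
  intro τ hτ
  obtain ⟨k, -, hk⟩ := Finset.mem_biUnion.mp (support_sum hτ)
  exact ha k hk

theorem monomial_mul_mem_combinationsSupportedIn (d : σ →₀ ℕ) (c : R)
    (hf : f ∈ combinationsSupportedIn g s) :
    monomial d c * f ∈ combinationsSupportedIn g ((d + ·) '' s) := by
  classical
  obtain ⟨a, rfl, ha⟩ := hf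
  refine ⟨fun k => monomial d c * a k, by simp [Finset.mul_sum, mul_assoc], fun k τ hτ => ?_⟩
  rw [Finset.mem_coe, mul_assoc] at hτ
  obtain ⟨d', hd', τ', hτ', rfl⟩ := Finset.mem_add.mp (support_mul _ _ hτ)
  rw [Finset.mem_singleton.mp (support_monomial_subset hd')]
  exact ⟨τ', ha k hτ', rfl⟩

theorem mem_combinationsSupportedIn_univ (hf : f ∈ Ideal.span (Set.range g)) :
    f ∈ combinationsSupportedIn g Set.univ := by
  obtain ⟨a, rfl⟩ := (Submodule.mem_span_range_iff_exists_fun _).mp hf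
  exact ⟨a, by simp [smul_eq_mul], fun _ => Set.subset_univ _⟩

end MvPolynomial

namespace MonomialOrder

variable {σ ι : Type*} (m : MonomialOrder σ)

section CommRing

variable {R : Type*} [CommRing R]

theorem degree_eq_of_coeff_ne_zero {p : MvPolynomial σ R} {δ : σ →₀ ℕ}
    (hp : ∀ τ ∈ p.support, τ ≼[m] δ) (hδ : p.coeff δ ≠ 0) : m.degree p = δ :=
  m.toSyn.injective <|
    le_antisymm (m.degree_le_iff.mpr hp) (m.le_degree (mem_support_iff.mpr hδ))

theorem degree_le_of_coeff_mul_ne_zero [NoZeroDivisors R] {a g : MvPolynomial σ R}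
    {δ : σ →₀ ℕ} (hag : ∀ τ ∈ (a * g).support, τ ≼[m] δ) (hδ : (a * g).coeff δ ≠ 0) :
    g ≠ 0 ∧ m.degree g ≤ δ := by
  have hag0 : a * g ≠ 0 := fun h => hδ (by simp [h])
  refine ⟨right_ne_zero_of_mul hag0, ?_⟩
  rw [← m.degree_eq_of_coeff_ne_zero hag hδ,
    m.degree_mul (left_ne_zero_of_mul hag0) (right_ne_zero_of_mul hag0)]
  exact le_add_self

theorem support_monomial_mul_le {g : MvPolynomial σ R} {δ : σ →₀ ℕ} (hg : m.degree g ≤ δ)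
    (c : R) : ∀ τ ∈ (monomial (δ - m.degree g) c * g).support, τ ≼[m] δ := by
  intro τ hτ
  calc m.toSyn τ ≤ m.toSyn (m.degree (monomial (δ - m.degree g) c * g)) := m.le_degree hτ
    _ ≤ m.toSyn (m.degree (monomial (δ - m.degree g) c)) + m.toSyn (m.degree g) :=
      m.degree_mul_le.trans_eq (map_add _ _ _)
    _ ≤ m.toSyn (δ - m.degree g) + m.toSyn (m.degree g) :=
      add_le_add_left (m.degree_monomial_le c) _
    _ = m.toSyn δ := by rw [← map_add, tsub_add_cancel_of_le hg]

theorem coeff_monomial_mul_degree {g : MvPolynomial σ R} {δ : σ →₀ ℕ} (hg : m.degree g ≤ δ)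
    (c : R) : (monomial (δ - m.degree g) c * g).coeff δ = c * m.leadingCoeff g := by
  rw [leadingCoeff]
  simpa only [tsub_add_cancel_of_le hg] using
    coeff_monomial_mul (m.degree g) (δ - m.degree g) c g

variable [Fintype ι] {g : ι → MvPolynomial σ R}

theorem monomial_mul_mem_combinationsSupportedIn_lt {p : MvPolynomial σ R} {γ δ : σ →₀ ℕ}
    (hp : p ∈ combinationsSupportedIn g {τ | τ ≺[m] γ}) (hγ : γ ≤ δ) (c : R) :
    monomial (δ - γ) c * p ∈ combinationsSupportedIn g {τ | τ ≺[m] δ} := by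
  refine combinationsSupportedIn_mono ?_ (monomial_mul_mem_combinationsSupportedIn _ c hp)
  rintro _ ⟨τ, hτ, rfl⟩
  calc m.toSyn (δ - γ + τ) = m.toSyn (δ - γ) + m.toSyn τ := map_add _ _ _
    _ < m.toSyn (δ - γ) + m.toSyn γ := add_lt_add_right hτ _
    _ = m.toSyn δ := by rw [← map_add, tsub_add_cancel_of_le hγ]

theorem exists_mem_combinationsSupportedIn_le {s : Set (σ →₀ ℕ)} {f : MvPolynomial σ R}
    (hf : f ∈ combinationsSupportedIn g s) (hf0 : f ≠ 0) :
    ∃ δ ∈ s, f ∈ combinationsSupportedIn g {τ | τ ≼[m] δ} := by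
  classical
  obtain ⟨a, rfl, ha⟩ := hf
  set T := Finset.univ.biUnion fun k => (a k * g k).support
  obtain ⟨τ, hτ⟩ := support_nonempty.mpr hf0
  obtain ⟨δ, hδT, hmax⟩ := T.exists_max_image m.toSyn ⟨τ, support_sum hτ⟩
  obtain ⟨k, -, hk⟩ := Finset.mem_biUnion.mp hδT
  exact ⟨δ, ha k hk, a, rfl,
    fun k τ hτ => hmax τ (Finset.mem_biUnion.mpr ⟨k, Finset.mem_univ _, hτ⟩)⟩

theorem exists_degree_le_of_coeff_ne_zero [NoZeroDivisors R] {f : MvPolynomial σ R}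
    {δ : σ →₀ ℕ} (hf : f ∈ combinationsSupportedIn g {τ | τ ≼[m] δ}) (hδ : f.coeff δ ≠ 0) :
    ∃ i, g i ≠ 0 ∧ m.degree (g i) ≤ m.degree f := by
  have hfδ : m.degree f = δ := m.degree_eq_of_coeff_ne_zero
    (fun _ hτ => support_subset_of_mem_combinationsSupportedIn hf hτ) hδ
  obtain ⟨a, rfl, ha⟩ := hf
  rw [coeff_sum] at hδ
  obtain ⟨i, -, hi⟩ := Finset.exists_ne_zero_of_sum_ne_zero hδ
  exact ⟨i, hfδ ▸ m.degree_le_of_coeff_mul_ne_zero (ha i) hi⟩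

end CommRing

section Field

variable {F : Type*} [Field F]

theorem monomial_mul_sPolynomial {f g : MvPolynomial σ F} (hf : f ≠ 0) (hg : g ≠ 0)
    {δ : σ →₀ ℕ} (hfδ : m.degree f ≤ δ) (hgδ : m.degree g ≤ δ) (c : F) :
    monomial (δ - (m.degree f ⊔ m.degree g)) (c / (m.leadingCoeff f * m.leadingCoeff g)) *
        m.sPolynomial f g =
      monomial (δ - m.degree f) (c / m.leadingCoeff f) * f -
        monomial (δ - m.degree g) (c / m.leadingCoeff g) * g := by
  have hγ : m.degree f ⊔ m.degree g ≤ δ := sup_le hfδ hgδ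
  have hlf := m.leadingCoeff_ne_zero_iff.mpr hf
  have hlg := m.leadingCoeff_ne_zero_iff.mpr hg
  rw [sPolynomial_def, mul_sub, ← mul_assoc, ← mul_assoc, monomial_mul, monomial_mul,
    tsub_add_tsub_cancel hγ le_sup_left, tsub_add_tsub_cancel hγ le_sup_right]
  congr 3 <;> field_simp

variable [Fintype ι] {g : ι → MvPolynomial σ F}

theorem sum_monomial_mul_eq_sum_sPolynomial {c : ι → F} {δ : σ →₀ ℕ} {i₀ : ι}
    (h₀ : g i₀ ≠ 0) (hδ₀ : m.degree (g i₀) ≤ δ)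
    (hc : ∀ i, c i ≠ 0 → g i ≠ 0 ∧ m.degree (g i) ≤ δ) (hsum : ∑ i, c i = 0) :
    ∑ i, monomial (δ - m.degree (g i)) (c i / m.leadingCoeff (g i)) * g i =
      ∑ i, monomial (δ - (m.degree (g i) ⊔ m.degree (g i₀)))
          (c i / (m.leadingCoeff (g i) * m.leadingCoeff (g i₀))) *
        m.sPolynomial (g i) (g i₀) := by
  have hterm : ∀ i, monomial (δ - (m.degree (g i) ⊔ m.degree (g i₀)))
        (c i / (m.leadingCoeff (g i) * m.leadingCoeff (g i₀))) * m.sPolynomial (g i) (g i₀) =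
      monomial (δ - m.degree (g i)) (c i / m.leadingCoeff (g i)) * g i -
        monomial (δ - m.degree (g i₀)) (c i / m.leadingCoeff (g i₀)) * g i₀ := by
    intro i
    by_cases hci : c i = 0
    · simp [hci]
    obtain ⟨hi, hiδ⟩ := hc i hci
    exact m.monomial_mul_sPolynomial hi h₀ hiδ hδ₀ (c i)
  rw [Finset.sum_congr rfl fun i _ => hterm i, Finset.sum_sub_distrib, ← Finset.sum_mul,
    ← map_sum, ← Finset.sum_div, hsum, zero_div, monomial_zero, zero_mul, sub_zero]

theorem support_sub_monomial_mul_lt {a g : MvPolynomial σ F} {δ : σ →₀ ℕ}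
    (hag : ∀ τ ∈ (a * g).support, τ ≼[m] δ) :
    ∀ τ ∈ ((a - monomial (δ - m.degree g) ((a * g).coeff δ / m.leadingCoeff g)) * g).support,
      τ ≺[m] δ := by
  classical
  intro τ hτ
  rw [sub_mul] at hτ
  by_cases hc : (a * g).coeff δ = 0
  · simp only [hc, zero_div, monomial_zero, zero_mul, sub_zero] at hτ
    refine (hag τ hτ).lt_of_ne fun h => mem_support_iff.mp hτ ?_
    rwa [m.toSyn.injective h]
  obtain ⟨hg, hgδ⟩ := m.degree_le_of_coeff_mul_ne_zero hag hc
  have hle : τ ≼[m] δ := (Finset.mem_union.mp (support_sub _ _ _ hτ)).elim (hag τ)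
    (m.support_monomial_mul_le hgδ _ τ)
  refine hle.lt_of_ne fun h => mem_support_iff.mp hτ ?_
  rw [m.toSyn.injective h, coeff_sub, m.coeff_monomial_mul_degree hgδ,
    div_mul_cancel₀ _ (m.leadingCoeff_ne_zero_iff.mpr hg), sub_self]

theorem mem_combinationsSupportedIn_lt_of_coeff_eq_zero
    (hS : ∀ i j, i ≠ j → g i ≠ 0 → g j ≠ 0 → m.sPolynomial (g i) (g j) ∈
      combinationsSupportedIn g {τ | τ ≺[m] m.degree (g i) ⊔ m.degree (g j)})
    {f : MvPolynomial σ F} {δ : σ →₀ ℕ} (hf : f ∈ combinationsSupportedIn g {τ | τ ≼[m] δ})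
    (hδ : f.coeff δ = 0) : f ∈ combinationsSupportedIn g {τ | τ ≺[m] δ} := by
  classical
  obtain ⟨a, rfl, ha⟩ := hf
  set c : ι → F := fun i => (a i * g i).coeff δ
  have hc : ∀ i, c i ≠ 0 → g i ≠ 0 ∧ m.degree (g i) ≤ δ :=
    fun i => m.degree_le_of_coeff_mul_ne_zero (ha i)
  have hsplit : ∑ i, a i * g i =
      ∑ i, (a i - monomial (δ - m.degree (g i)) (c i / m.leadingCoeff (g i))) * g i +
        ∑ i, monomial (δ - m.degree (g i)) (c i / m.leadingCoeff (g i)) * g i := by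
    simp [sub_mul]
  rw [hsplit]
  refine add_mem (sum_mem fun i _ => mul_mem_combinationsSupportedIn i
    (m.support_sub_monomial_mul_lt (ha i))) ?_
  by_cases h0 : ∀ i, c i = 0
  · simp [h0]
  obtain ⟨i₀, hi₀⟩ := not_forall.mp h0
  obtain ⟨hg₀, hδ₀⟩ := hc i₀ hi₀
  rw [m.sum_monomial_mul_eq_sum_sPolynomial hg₀ hδ₀ hc (by simpa [coeff_sum] using hδ)]
  refine sum_mem fun i _ => ?_
  by_cases hci : c i = 0
  · simp [hci]
  rcases eq_or_ne i i₀ with rfl | hne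
  · simp
  obtain ⟨hgi, hiδ⟩ := hc i hci
  exact m.monomial_mul_mem_combinationsSupportedIn_lt (hS i i₀ hne hgi hg₀) (sup_le hiδ hδ₀) _

theorem exists_degree_le_degree_of_mem_span
    (hS : ∀ i j, i ≠ j → g i ≠ 0 → g j ≠ 0 → m.sPolynomial (g i) (g j) ∈
      combinationsSupportedIn g {τ | τ ≺[m] m.degree (g i) ⊔ m.degree (g j)})
    {f : MvPolynomial σ F} (hf : f ∈ Ideal.span (Set.range g)) (hf0 : f ≠ 0) :
    ∃ i, g i ≠ 0 ∧ m.degree (g i) ≤ m.degree f := by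
  obtain ⟨δ, -, hδ⟩ :=
    m.exists_mem_combinationsSupportedIn_le (mem_combinationsSupportedIn_univ hf) hf0
  induction δ using (InvImage.wf m.toSyn wellFounded_lt).induction with
  | h δ ih =>
    by_cases hc : f.coeff δ = 0
    · obtain ⟨δ', hδ', hf'⟩ := m.exists_mem_combinationsSupportedIn_le
        (m.mem_combinationsSupportedIn_lt_of_coeff_eq_zero hS hδ hc) hf0
      exact ih δ' hδ' hf'
    · exact m.exists_degree_le_of_coeff_ne_zero hδ hc

end Field

theorem isLeadMon_iff {R : Type*} [CommSemiring R] {f : MvPolynomial σ R} {α : σ →₀ ℕ} :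
    IsLeadMon (fun β γ => β ≼[m] γ) f α ↔ f ≠ 0 ∧ m.degree f = α := by
  refine ⟨fun ⟨hα, hmax⟩ => ?_, ?_⟩
  · have hf : f ≠ 0 := support_nonempty.mp ⟨α, hα⟩
    exact ⟨hf, m.toSyn.injective <|
      le_antisymm (hmax _ (m.degree_mem_support hf)) (m.le_degree hα)⟩
  · rintro ⟨hf, rfl⟩
    exact ⟨m.degree_mem_support hf, fun _ => m.le_degree⟩

end MonomialOrder

namespace MonomialOrder

variable {σ : Type*}

/-- A copy of `σ →₀ ℕ` without its componentwise order, to carry the order of `ofLE`. -/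
def LESyn (σ : Type*) := σ →₀ ℕ

theorem rel_of_le {le : (σ →₀ ℕ) → (σ →₀ ℕ) → Prop}
    (hadd : ∀ α β γ, le α β → le (α + γ) (β + γ)) (hglobal : ∀ α, le 0 α)
    {α β : σ →₀ ℕ} (h : α ≤ β) : le α β := by
  simpa [tsub_add_cancel_of_le h] using hadd 0 (β - α) α (hglobal _)

noncomputable def ofLE [Finite σ] (le : (σ →₀ ℕ) → (σ →₀ ℕ) → Prop)
    (hrefl : ∀ α, le α α)
    (htrans : ∀ α β γ, le α β → le β γ → le α γ)
    (hantisymm : ∀ α β, le α β → le β α → α = β)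
    (htotal : ∀ α β, le α β ∨ le β α)
    (hadd : ∀ α β γ, le α β → le (α + γ) (β + γ))
    (hglobal : ∀ α, le 0 α) : MonomialOrder σ :=
  letI : AddCommMonoid (LESyn σ) := inferInstanceAs (AddCommMonoid (σ →₀ ℕ))
  letI : LinearOrder (LESyn σ) :=
    { le := le
      le_refl := hrefl
      le_trans := htrans
      le_antisymm := hantisymm
      le_total := htotal
      toDecidableLE := Classical.decRel _ }
  let e : (σ →₀ ℕ) ≃+ LESyn σ := AddEquiv.refl _
  have hmono : Monotone e := fun _ _ => rel_of_le hadd hglobal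
  { syn := LESyn σ
    toSyn := e
    toSyn_monotone := hmono
    isOrderedAddMonoid_syn := { add_le_add_left := fun α β h γ => hadd α β γ h }
    wellFoundedLT_syn := (hmono.wellQuasiOrderedLE_of_wellQuasiOrderedLE_of_surjective
      e.surjective).to_wellFoundedLT }

variable {n : ℕ} {ι F : Type*} [Fintype ι] [Field F] (m : MonomialOrder (Fin n))

theorem sPolynomial_eq_smul_spolyOf {f g : MvPolynomial (Fin n) F} (hf : f ≠ 0) (hg : g ≠ 0) :
    m.sPolynomial f g =
      (m.leadingCoeff f * m.leadingCoeff g) • spolyOf f g (m.degree f) (m.degree g) := by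
  have hlf := m.leadingCoeff_ne_zero_iff.mpr hf
  have hlg := m.leadingCoeff_ne_zero_iff.mpr hg
  rw [sPolynomial_def, spolyOf, smul_sub, ← smul_mul_assoc, ← smul_mul_assoc, smul_monomial,
    smul_monomial, smul_eq_mul, smul_eq_mul, ← leadingCoeff, ← leadingCoeff]
  congr 3 <;> field_simp

theorem sPolynomial_mem_combinationsSupportedIn_of_spolyOf_eq_sum
    {g : ι → MvPolynomial (Fin n) F} {i j : ι} (hi : g i ≠ 0) (hj : g j ≠ 0)
    {a : ι → MvPolynomial (Fin n) F}
    (hrep : spolyOf (g i) (g j) (m.degree (g i)) (m.degree (g j)) = ∑ k, a k * g k)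
    (hstd : ∀ k, a k * g k ≠ 0 → ∃ β σ : Fin n →₀ ℕ,
      IsLeadMon (fun β γ => β ≼[m] γ) (a k * g k) β ∧
      IsLeadMon (fun β γ => β ≼[m] γ)
        (spolyOf (g i) (g j) (m.degree (g i)) (m.degree (g j))) σ ∧ β ≼[m] σ) :
    m.sPolynomial (g i) (g j) ∈
      combinationsSupportedIn g {τ | τ ≺[m] m.degree (g i) ⊔ m.degree (g j)} := by
  have hc : m.leadingCoeff (g i) * m.leadingCoeff (g j) ≠ 0 :=
    mul_ne_zero (m.leadingCoeff_ne_zero_iff.mpr hi) (m.leadingCoeff_ne_zero_iff.mpr hj)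
  rw [m.sPolynomial_eq_smul_spolyOf hi hj]
  refine Submodule.smul_mem _ _ ⟨a, hrep, fun k τ hτ => ?_⟩
  obtain ⟨β, σ, hβ, hσ, hβσ⟩ := hstd k fun h => by simp [h] at hτ
  have hσS : σ ∈ (m.sPolynomial (g i) (g j)).support := by
    rw [m.sPolynomial_eq_smul_spolyOf hi hj, support_smul_eq hc]
    exact hσ.1
  exact ((hβ.2 τ hτ).trans hβσ).trans_lt <| (m.le_degree hσS).trans_lt <|
    m.degree_sPolynomial_lt_sup_degree (support_nonempty.mp ⟨σ, hσS⟩)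

end MonomialOrder

theorem buchberger_criterion_general (F : Type*) [Field F] (n l : ℕ)
    (le : (Fin n →₀ ℕ) → (Fin n →₀ ℕ) → Prop)
    -- `le` is a global monomial order
    (hrefl : ∀ α, le α α)
    (htrans : ∀ α β γ, le α β → le β γ → le α γ)
    (hantisymm : ∀ α β, le α β → le β α → α = β)
    (htotal : ∀ α β, le α β ∨ le β α)
    (hadd : ∀ α β γ, le α β → le (α + γ) (β + γ))
    (hglobal : ∀ α, le 0 α)
    (g : Fin l → MvPolynomial (Fin n) F)
    (hbuch : ∀ i j : Fin l, i ≠ j →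
      ∀ αi αj : Fin n →₀ ℕ, IsLeadMon le (g i) αi → IsLeadMon le (g j) αj →
        ∃ a : Fin l → MvPolynomial (Fin n) F,
          spolyOf (g i) (g j) αi αj = ∑ k, a k * g k ∧
          ∀ k, a k * g k ≠ 0 → ∃ β σ : Fin n →₀ ℕ,
            IsLeadMon le (a k * g k) β ∧
            IsLeadMon le (spolyOf (g i) (g j) αi αj) σ ∧ le β σ) :
    ∀ f ∈ Ideal.span (Set.range g), f ≠ 0 →
      ∃ i : Fin l, ∃ α β : Fin n →₀ ℕ,
        IsLeadMon le f α ∧ IsLeadMon le (g i) β ∧ β ≤ α := by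
  set m := MonomialOrder.ofLE le hrefl htrans hantisymm htotal hadd hglobal
  have hlead {p : MvPolynomial (Fin n) F} {α : Fin n →₀ ℕ} :
      IsLeadMon le p α ↔ p ≠ 0 ∧ m.degree p = α := m.isLeadMon_iff
  have hS (i j : Fin l) (hij : i ≠ j) (hi : g i ≠ 0) (hj : g j ≠ 0) :
      m.sPolynomial (g i) (g j) ∈
        combinationsSupportedIn g {τ | τ ≺[m] m.degree (g i) ⊔ m.degree (g j)} := by
    obtain ⟨a, hrep, hstd⟩ := hbuch i j hij _ _ (hlead.mpr ⟨hi, rfl⟩) (hlead.mpr ⟨hj, rfl⟩)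
    exact m.sPolynomial_mem_combinationsSupportedIn_of_spolyOf_eq_sum hi hj hrep hstd
  intro f hf hf0
  obtain ⟨i, hgi, hle⟩ := m.exists_degree_le_degree_of_mem_span hS hf hf0
  exact ⟨i, _, _, hlead.mpr ⟨hf0, rfl⟩, hlead.mpr ⟨hgi, rfl⟩, hle⟩

/-- Buchberger's criterion: if every S-polynomial `spoly(gᵢ, gⱼ)`
(for `i ≠ j`) admits a standard representation `spoly(gᵢ,gⱼ) = Σ a_k g_k` in which
the leading monomial of every nonzero `a_k g_k` is dominated by the leading
monomial of `spoly(gᵢ,gⱼ)`, then `{g₁,…,g_l}` is a Gröbner basis of the ideal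
it generates. -/
theorem buchberger_criterion (F : Type*) [Field F] (n l : ℕ)
    (le : (Fin n →₀ ℕ) → (Fin n →₀ ℕ) → Prop)
    -- `le` is a global monomial order
    (hrefl : ∀ α, le α α)
    (htrans : ∀ α β γ, le α β → le β γ → le α γ)
    (hantisymm : ∀ α β, le α β → le β α → α = β)
    (htotal : ∀ α β, le α β ∨ le β α)
    (hadd : ∀ α β γ, le α β → le (α + γ) (β + γ))
    (hglobal : ∀ α, le 0 α)
    (g : Fin l → MvPolynomial (Fin n) F)
    (hg : ∀ i, g i ≠ 0)
    (hbuch : ∀ i j : Fin l, i ≠ j →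
      ∀ αi αj : Fin n →₀ ℕ, IsLeadMon le (g i) αi → IsLeadMon le (g j) αj →
        ∃ a : Fin l → MvPolynomial (Fin n) F,
          spolyOf (g i) (g j) αi αj = ∑ k, a k * g k ∧
          ∀ k, a k * g k ≠ 0 → ∃ β σ : Fin n →₀ ℕ,
            IsLeadMon le (a k * g k) β ∧
            IsLeadMon le (spolyOf (g i) (g j) αi αj) σ ∧ le β σ) :
    ∀ f ∈ Ideal.span (Set.range g), f ≠ 0 →
      ∃ i : Fin l, ∃ α β : Fin n →₀ ℕ,
        IsLeadMon le f α ∧ IsLeadMon le (g i) β ∧ β ≤ α :=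
  buchberger_criterion_general F n l le hrefl htrans hantisymm htotal hadd hglobal g hbuch
end

section
/- Let N ≥ 1 and let R be the polynomial ring over ℚ whose variables x_{i,j} = x_{j,i} are indexed by unordered pairs {i,j} of elements of {1,…,N}. Let S be the N×N symmetric matrix over R with entry S_{i,j} = x_{i,j}, and let P = det S ∈ R. Then for all indices i and j in {1,…,N}, the Laplace-expansion identity Σ_{k=1}^{N} (1 + δ_{i,k}) · x_{j,k} · (∂P/∂x_{i,k}) − 2 δ_{i,j} · P = 0 holds, where δ is the Kronecker delta and ∂/∂x_{i,k} denotes the formal partial derivative with respect to the variable indexed by the unordered pair {i,k}. -/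
/-!
Jacobi's formula writes `∂P/∂x_{i,k}` as the sum of the cofactors `adj(S)_{b,a}` over the
positions `(a, b)` where `x_{i,k}` occurs in `S`. These are `(i, k)` and `(k, i)`, so by symmetry
of the adjugate the derivative is `2 adj(S)_{k,i}` off the diagonal and `adj(S)_{i,i}` on it; the
weight `1 + δ_{i,k}` makes every term `2 x_{j,k} adj(S)_{k,i}`, and summing over `k` gives
`2 (S adj S)_{j,i} = 2 δ_{i,j} det S`.
-/

open MvPolynomial Finset

namespace Matrix

variable {n A : Type*} [Fintype n] [DecidableEq n] [CommRing A]

theorem det_updateRow_eq_sum_mul_adjugate (M : Matrix n n A) (a : n) (r : n → A) :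
    (M.updateRow a r).det = ∑ b, r b * M.adjugate b a := by
  rw [← cramer_transpose_apply, cramer_eq_adjugate_mulVec, ← adjugate_transpose, mulVec,
    dotProduct]
  simp only [transpose_apply, mul_comm]

end Matrix

namespace Derivation

theorem leibniz_finset_prod {R A M ι : Type*} [CommSemiring R] [CommSemiring A] [AddCommMonoid M]
    [Algebra R A] [Module A M] [Module R M] [DecidableEq ι] (D : Derivation R A M)
    (s : Finset ι) (f : ι → A) :
    D (∏ a ∈ s, f a) = ∑ a ∈ s, (∏ b ∈ s.erase a, f b) • D (f a) := by
  induction s using Finset.induction_on with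
  | empty => simp
  | @insert a s ha ih =>
    rw [prod_insert ha, leibniz, ih, sum_insert ha, erase_insert ha, smul_sum, add_comm]
    congr 1
    refine sum_congr rfl fun b hb => ?_
    rw [erase_insert_of_ne (ne_of_mem_of_not_mem hb ha).symm,
      prod_insert fun h => ha (mem_of_mem_erase h), mul_smul]

section Det

open Matrix

variable {R A n : Type*} [CommSemiring R] [CommRing A] [Algebra R A] [Fintype n] [DecidableEq n]
  (D : Derivation R A A) (M : Matrix n n A)

theorem leibniz_det : D M.det = ∑ a, (M.updateRow a fun b => D (M a b)).det := by
  simp only [det_apply, map_sum, Units.smul_def, map_zsmul]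
  rw [sum_comm]
  refine sum_congr rfl fun σ _ => ?_
  rw [← smul_sum, D.leibniz_finset_prod,
    ← Equiv.sum_comp σ fun a => ∏ c, (M.updateRow a fun b => D (M a b)) (σ c) c]
  congr 1
  refine sum_congr rfl fun c _ => ?_
  rw [← mul_prod_erase univ _ (mem_univ c), updateRow_self, smul_eq_mul, mul_comm]
  congr 1
  refine prod_congr rfl fun b hb => ?_
  rw [updateRow_ne fun h => (mem_erase.mp hb).1 (σ.injective h)]

theorem leibniz_det_eq_sum_mul_adjugate :
    D M.det = ∑ a, ∑ b, D (M a b) * M.adjugate b a := by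
  simp only [D.leibniz_det, det_updateRow_eq_sum_mul_adjugate]

end Det

end Derivation

section GenericSymmetric

variable {n R : Type*} [CommRing R] {S : Matrix n n (MvPolynomial (Sym2 n) R)}

theorem isSymm_of_apply_eq_X_sym2 (hS : ∀ a b, S a b = X s(a, b)) : S.IsSymm :=
  Matrix.IsSymm.ext fun a b => by rw [hS, hS, Sym2.eq_swap]

variable [Fintype n] [DecidableEq n]

theorem pderiv_det_of_apply_eq_X_sym2 (hS : ∀ a b, S a b = X s(a, b)) (i k : n) :
    pderiv s(i, k) S.det = ∑ p ∈ ({(i, k), (k, i)} : Finset (n × n)), S.adjugate p.2 p.1 := by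
  have hfiber : ({(i, k), (k, i)} : Finset (n × n)) =
      univ.filter fun p : n × n => s(p.1, p.2) = s(i, k) := by
    ext ⟨a, b⟩
    simp
  rw [(pderiv s(i, k)).leibniz_det_eq_sum_mul_adjugate S, hfiber, sum_filter,
    ← Fintype.sum_prod_type']
  simp only [hS, pderiv_X, Pi.single_apply, ite_mul, one_mul, zero_mul]

theorem one_add_ite_mul_pderiv_det_of_apply_eq_X_sym2 (hS : ∀ a b, S a b = X s(a, b)) (i k : n) :
    ((1 : MvPolynomial (Sym2 n) R) + if i = k then 1 else 0) * pderiv s(i, k) S.det =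
      2 * S.adjugate k i := by
  rw [pderiv_det_of_apply_eq_X_sym2 hS]
  by_cases hik : i = k
  · subst hik
    simp only [pair_eq_singleton, sum_singleton, if_true]
    ring
  · have hpair : (i, k) ≠ (k, i) := fun h => hik (Prod.ext_iff.mp h).1
    rw [sum_pair hpair, if_neg hik, (isSymm_of_apply_eq_X_sym2 hS).adjugate.apply k i]
    ring

end GenericSymmetric

theorem laplace_expansion_symmetric_det_general (N : ℕ)
    (S : Matrix (Fin N) (Fin N) (MvPolynomial (Sym2 (Fin N)) ℚ))
    (hS : ∀ a b : Fin N, S a b = X s(a, b))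
    (P : MvPolynomial (Sym2 (Fin N)) ℚ) (hP : P = S.det)
    (i j : Fin N) :
    (∑ k : Fin N,
        ((1 : MvPolynomial (Sym2 (Fin N)) ℚ) + if i = k then 1 else 0) *
          X s(j, k) * pderiv s(i, k) P)
      - 2 * (if i = j then 1 else 0) * P = 0 := by
  subst hP
  have hterm (k : Fin N) :
      ((1 : MvPolynomial (Sym2 (Fin N)) ℚ) + if i = k then 1 else 0) * X s(j, k) *
        pderiv s(i, k) S.det = 2 * (S j k * S.adjugate k i) := by
    rw [mul_right_comm, one_add_ite_mul_pderiv_det_of_apply_eq_X_sym2 hS, hS]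
    ring
  rw [sum_congr rfl fun k _ => hterm k, ← mul_sum, ← Matrix.mul_apply, Matrix.mul_adjugate,
    Matrix.smul_apply, Matrix.one_apply, smul_eq_mul]
  simp only [@eq_comm _ j i]
  ring

/-- Laplace-expansion identity for the determinant of a generic
symmetric matrix. The variables `x_{i,j} = x_{j,i}` are indexed by unordered
pairs (`Sym2 (Fin N)`), `S` is the generic symmetric `N×N` matrix,
`P = det S`, and for all `i, j`:
`Σ_k (1 + δ_{i,k}) · x_{j,k} · ∂P/∂x_{i,k} − 2 δ_{i,j} · P = 0`. -/
theorem laplace_expansion_symmetric_det (N : ℕ) (hN : 1 ≤ N)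
    (S : Matrix (Fin N) (Fin N) (MvPolynomial (Sym2 (Fin N)) ℚ))
    (hS : ∀ a b : Fin N, S a b = X s(a, b))
    (P : MvPolynomial (Sym2 (Fin N)) ℚ) (hP : P = S.det)
    (i j : Fin N) :
    (∑ k : Fin N,
        ((1 : MvPolynomial (Sym2 (Fin N)) ℚ) + if i = k then 1 else 0) *
          X s(j, k) * pderiv s(i, k) P)
      - 2 * (if i = j then 1 else 0) * P = 0 :=
  laplace_expansion_symmetric_det_general N S hS P hP i j
end

section
/- Let F be a field, let A = F[z₁,…,z_m], let P ∈ A, and let k ≤ m. Suppose a₁,…,a_m, b ∈ A satisfy the syzygy equation Σ_{i=1}^{m} a_i · (∂P/∂z_i) + b · P = 0, and suppose that for each i ≤ k there exists b_i ∈ A with a_i = b_i · z_i. Let Q = z₁ z₂ ⋯ z_k. Then Σ_{i=1}^{m} a_i · ∂(Q·P)/∂z_i = Q · P · ((Σ_{i=1}^{k} b_i) − b); in particular the vector (a₁,…,a_m) is a polynomial tangent vector of the hypersurface Q·P = 0, i.e., Σ_{i=1}^{m} a_i · ∂(Q·P)/∂z_i is divisible by Q·P in A. -/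
/-!
Writing `D = ∑ aᵢ ∂/∂zᵢ`, the Leibniz rule gives `D(QP) = D(Q)·P + Q·D(P)`. The syzygy says
`D(P) = -b P`, and since each of the first `k` coefficients is divisible by its variable,
`aᵢ ∂Q/∂zᵢ = bᵢ zᵢ ∏_{j ≠ i} z_j = bᵢ Q`, so `D(Q) = (∑_{i<k} bᵢ) Q`.
-/

open MvPolynomial

namespace MvPolynomial

variable {R σ : Type*} [CommSemiring R]

theorem pderiv_prod_X_of_notMem {s : Finset σ} {i : σ} (hi : i ∉ s) :
    pderiv i (∏ j ∈ s, (X j : MvPolynomial σ R)) = 0 := by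
  classical
  induction s using Finset.induction with
  | empty => simp
  | insert j s hj ih =>
    rw [Finset.prod_insert hj, pderiv_mul, ih (fun h => hi (Finset.mem_insert_of_mem h)),
      pderiv_X_of_ne (by rintro rfl; exact hi (Finset.mem_insert_self j s))]
    simp

theorem pderiv_prod_X_of_mem [DecidableEq σ] {s : Finset σ} {i : σ} (hi : i ∈ s) :
    pderiv i (∏ j ∈ s, (X j : MvPolynomial σ R)) = ∏ j ∈ s.erase i, X j := by
  rw [← Finset.prod_erase_mul s _ hi, pderiv_mul, pderiv_prod_X_of_notMem (s.notMem_erase i),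
    pderiv_X_self]
  simp

theorem sum_mul_pderiv_mul {ι : Type*} (t : Finset ι) (v : ι → σ) (a : ι → MvPolynomial σ R)
    (p q : MvPolynomial σ R) :
    ∑ i ∈ t, a i * pderiv (v i) (p * q) =
      (∑ i ∈ t, a i * pderiv (v i) p) * q + p * ∑ i ∈ t, a i * pderiv (v i) q := by
  simp only [pderiv_mul, Finset.sum_mul, Finset.mul_sum, ← Finset.sum_add_distrib]
  refine Finset.sum_congr rfl fun i _ => ?_
  ring

theorem sum_mul_pderiv_prod_X [Fintype σ] (s : Finset σ) (a c : σ → MvPolynomial σ R)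
    (h : ∀ i ∈ s, a i = c i * X i) :
    ∑ i, a i * pderiv i (∏ j ∈ s, (X j : MvPolynomial σ R)) = (∑ i ∈ s, c i) * ∏ j ∈ s, X j := by
  classical
  rw [← Finset.sum_subset (Finset.subset_univ s)
      fun i _ hi => by rw [pderiv_prod_X_of_notMem hi, mul_zero], Finset.sum_mul]
  refine Finset.sum_congr rfl fun i hi => ?_
  rw [pderiv_prod_X_of_mem hi, h i hi, mul_assoc, Finset.mul_prod_erase s _ hi]

end MvPolynomial

theorem tangent_vector_of_reducible_hypersurface_general
    (F : Type*) [Field F] (m k : ℕ)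
    (P b : MvPolynomial (Fin m) F)
    (a bv : Fin m → MvPolynomial (Fin m) F)
    (hsyz : (∑ i, a i * pderiv i P) + b * P = 0)
    (hdiv : ∀ i : Fin m, (i : ℕ) < k → a i = bv i * X i)
    (Q : MvPolynomial (Fin m) F)
    (hQ : Q = ∏ i ∈ Finset.univ.filter (fun i : Fin m => (i : ℕ) < k), X i) :
    (∑ i, a i * pderiv i (Q * P))
        = Q * P * ((∑ i ∈ Finset.univ.filter (fun i : Fin m => (i : ℕ) < k), bv i) - b)
      ∧ Q * P ∣ ∑ i, a i * pderiv i (Q * P) := by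
  have hQ_deriv : ∑ i, a i * pderiv i Q
      = (∑ i ∈ Finset.univ.filter (fun i : Fin m => (i : ℕ) < k), bv i) * Q := by
    rw [hQ]
    exact sum_mul_pderiv_prod_X _ a bv fun i hi => hdiv i (Finset.mem_filter.mp hi).2
  have hP_deriv : ∑ i, a i * pderiv i P = -(b * P) := eq_neg_of_add_eq_zero_left hsyz
  have h_eq : ∑ i, a i * pderiv i (Q * P)
      = Q * P * ((∑ i ∈ Finset.univ.filter (fun i : Fin m => (i : ℕ) < k), bv i) - b) := by
    rw [sum_mul_pderiv_mul, hQ_deriv, hP_deriv]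
    ring
  exact ⟨h_eq, h_eq ▸ dvd_mul_right _ _⟩

/-- if `(a₁,…,a_m, b)` satisfy the syzygy equation
`Σ aᵢ ∂P/∂zᵢ + b P = 0` and `aᵢ = bᵢ zᵢ` for `i ≤ k`, then with
`Q = z₁⋯z_k` we have `Σ aᵢ ∂(QP)/∂zᵢ = QP·((Σ_{i≤k} bᵢ) − b)`;
in particular `(a₁,…,a_m)` is a polynomial tangent vector of the
hypersurface `QP = 0`, i.e. `QP` divides `Σ aᵢ ∂(QP)/∂zᵢ`. -/
theorem tangent_vector_of_reducible_hypersurface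
    (F : Type*) [Field F] (m k : ℕ) (hk : k ≤ m)
    (P b : MvPolynomial (Fin m) F)
    (a bv : Fin m → MvPolynomial (Fin m) F)
    (hsyz : (∑ i, a i * pderiv i P) + b * P = 0)
    (hdiv : ∀ i : Fin m, (i : ℕ) < k → a i = bv i * X i)
    (Q : MvPolynomial (Fin m) F)
    (hQ : Q = ∏ i ∈ Finset.univ.filter (fun i : Fin m => (i : ℕ) < k), X i) :
    (∑ i, a i * pderiv i (Q * P))
        = Q * P * ((∑ i ∈ Finset.univ.filter (fun i : Fin m => (i : ℕ) < k), bv i) - b)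
      ∧ Q * P ∣ ∑ i, a i * pderiv i (Q * P) :=
  tangent_vector_of_reducible_hypersurface_general F m k P b a bv hsyz hdiv Q hQ
end

section
/- Let F be a field, let A = F[z₁,…,z_m], and let C ⊆ {1,…,m} be a set of cut indices. Let ev : A → A be the F-algebra homomorphism that substitutes z_ζ ↦ 0 for every ζ ∈ C and fixes all other variables. Suppose P ∈ A and a₁,…,a_m, b ∈ A satisfy Σ_{i=1}^{m} a_i · (∂P/∂z_i) + b · P = 0, and suppose that z_ζ divides a_ζ for every ζ ∈ C. Set P̃ = ev(P). Then the substituted data satisfy the cut syzygy equation: Σ_{i ∉ C} ev(a_i) · (∂P̃/∂z_i) + ev(b) · P̃ = 0. -/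
/-!
Applying `ev` to the syzygy kills the terms with `ζ ∈ C`, since `z_ζ ∣ a_ζ` and `ev z_ζ = 0`.
For `i ∉ C` the substitution `ev` commutes with `∂/∂z_i`, because it sends every variable `z_j`
to a polynomial with the same `z_i`-derivative as `z_j`; so the surviving terms are exactly the
cut syzygy.
-/

open MvPolynomial

namespace MvPolynomial

variable {R σ : Type*} [CommSemiring R]

theorem aeval_eq_zero_of_X_dvd {S : Type*} [CommSemiring S] [Algebra R S] {f : σ → S}
    {p : MvPolynomial σ R} {i : σ} (hp : X i ∣ p) (hf : f i = 0) : aeval f p = 0 := by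
  obtain ⟨c, rfl⟩ := hp
  simp [hf]

theorem pderiv_aeval_of_pderiv_eq_pderiv_X {f : σ → MvPolynomial σ R} {i : σ}
    (hf : ∀ j, pderiv i (f j) = pderiv i (X j)) (p : MvPolynomial σ R) :
    pderiv i (aeval f p) = aeval f (pderiv i p) := by
  classical
  induction p using MvPolynomial.induction_on with
  | C c => simp
  | add p q hp hq => simp only [map_add, hp, hq]
  | mul_X p j hp =>
    have hconst : aeval f (pderiv i (X j : MvPolynomial σ R)) = pderiv i (X j) := by
      rw [pderiv_X, Pi.single_apply]
      split_ifs <;> simp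
    simp only [map_mul, Derivation.leibniz, smul_eq_mul, map_add, aeval_X, hp, hconst, hf]

end MvPolynomial

/-- applying a unitarity cut to a syzygy. If
`Σ aᵢ ∂P/∂zᵢ + b P = 0` and `z_ζ ∣ a_ζ` for every cut index `ζ ∈ C`, then,
with `ev` the evaluation homomorphism `z_ζ ↦ 0` (`ζ ∈ C`), `z_i ↦ z_i`
otherwise, and `P̃ = ev P`, the cut syzygy equation holds:
`Σ_{i ∉ C} ev(aᵢ) ∂P̃/∂zᵢ + ev(b) P̃ = 0`. -/
theorem syzygy_on_cut
    (F : Type*) [Field F] (m : ℕ) (cutS : Finset (Fin m))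
    (ev : MvPolynomial (Fin m) F →ₐ[F] MvPolynomial (Fin m) F)
    (hev : ev = aeval fun i : Fin m => if i ∈ cutS then 0 else X i)
    (P b : MvPolynomial (Fin m) F)
    (a : Fin m → MvPolynomial (Fin m) F)
    (hsyz : (∑ i, a i * pderiv i P) + b * P = 0)
    (hdiv : ∀ ζ ∈ cutS, X ζ ∣ a ζ) :
    (∑ i ∈ cutSᶜ, ev (a i) * pderiv i (ev P)) + ev b * ev P = 0 := by
  have hcut : ∀ ζ ∈ cutS, ev (a ζ * pderiv ζ P) = 0 := fun ζ hζ =>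
    hev ▸ aeval_eq_zero_of_X_dvd (dvd_mul_of_dvd_left (hdiv ζ hζ) _) (if_pos hζ)
  have hcomm : ∀ i ∈ cutSᶜ, pderiv i (ev P) = ev (pderiv i P) := by
    intro i hi
    refine hev ▸ pderiv_aeval_of_pderiv_eq_pderiv_X (fun j => ?_) P
    split_ifs with hj
    · rw [map_zero, pderiv_X_of_ne (ne_of_mem_of_not_mem hj (Finset.mem_compl.mp hi))]
    · rfl
  calc (∑ i ∈ cutSᶜ, ev (a i) * pderiv i (ev P)) + ev b * ev P
      = (∑ i ∈ cutS, ev (a i * pderiv i P)) + (∑ i ∈ cutSᶜ, ev (a i * pderiv i P))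
          + ev (b * P) := by
        rw [Finset.sum_eq_zero hcut, zero_add, map_mul]
        congr 1
        exact Finset.sum_congr rfl fun i hi => by rw [hcomm i hi, map_mul]
    _ = ev ((∑ i, a i * pderiv i P) + b * P) := by
        rw [Finset.sum_add_sum_compl, map_add, map_sum]
    _ = 0 := by rw [hsyz, map_zero]
end
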